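/- Let W be a group, r an involution in W, W⁺ ⊴ W of index 2 with r ∉ W⁺, and M, K normal subgroups of W⁺. Set N = M ∩ K, Nʳ = rNr⁻¹, N_W = N ∩ Nʳ, and similarly for M and K. Then the quotient Nʳ/N_W embeds into the direct product (rMr⁻¹·M/M) × (rKr⁻¹·K/K); that is, the chirality group of the mix embeds into the direct product of the chirality groups of the components. -/

import Mathlib

/-- The conjugate subgroup `r M r⁻¹`. -/
def conjSub {W : Type} [Group W] (r : W) (M : Subgroup W) : Subgroup W :=
  M.map (MulAut.conj r).toMonoidHom

theorem conjSub_mono {W : Type} [Group W] (r : W) {M K : Subgroup W} (h : M ≤ K) :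
    conjSub r M ≤ conjSub r K :=
  Subgroup.map_mono h

theorem QuotientGroup.exists_injective_of_eq_ker {G P : Type*} [Group G] [Group P]
    {N : Subgroup G} [N.Normal] (φ : G →* P) (hN : N = φ.ker) :
    ∃ f : G ⧸ N →* P, Function.Injective f := by
  subst hN
  exact ⟨QuotientGroup.kerLift φ, QuotientGroup.kerLift_injective φ⟩

namespace Subgroup

variable {G : Type*} [Group G] {H A B : Subgroup G} (M K : Subgroup G)

def toQuotientProd (hA : H ≤ A) (hB : H ≤ B) [(M.subgroupOf A).Normal]
    [(K.subgroupOf B).Normal] : H →* (A ⧸ M.subgroupOf A) × (B ⧸ K.subgroupOf B) :=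
  ((QuotientGroup.mk' _).comp (inclusion hA)).prod ((QuotientGroup.mk' _).comp (inclusion hB))

theorem ker_toQuotientProd (hA : H ≤ A) (hB : H ≤ B) [(M.subgroupOf A).Normal]
    [(K.subgroupOf B).Normal] : (toQuotientProd M K hA hB).ker = (M ⊓ K).subgroupOf H := by
  ext x
  simp [toQuotientProd, mem_subgroupOf]

end Subgroup

theorem stmt_9_general (W : Type) [Group W] (r : W)
    (M K : Subgroup W)
    [((M ⊓ K ⊓ conjSub r (M ⊓ K)).subgroupOf (conjSub r (M ⊓ K))).Normal]
    [(M.subgroupOf (conjSub r M ⊔ M)).Normal]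
    [(K.subgroupOf (conjSub r K ⊔ K)).Normal] :
    ∃ f : (↥(conjSub r (M ⊓ K)) ⧸
          (M ⊓ K ⊓ conjSub r (M ⊓ K)).subgroupOf (conjSub r (M ⊓ K))) →*
        ((↥(conjSub r M ⊔ M) ⧸ M.subgroupOf (conjSub r M ⊔ M)) ×
         (↥(conjSub r K ⊔ K) ⧸ K.subgroupOf (conjSub r K ⊔ K))),
      Function.Injective f := by
  have hM : conjSub r (M ⊓ K) ≤ conjSub r M ⊔ M := (conjSub_mono r inf_le_left).trans le_sup_left
  have hK : conjSub r (M ⊓ K) ≤ conjSub r K ⊔ K := (conjSub_mono r inf_le_right).trans le_sup_left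
  refine QuotientGroup.exists_injective_of_eq_ker (Subgroup.toQuotientProd M K hM hK) ?_
  rw [Subgroup.inf_subgroupOf_right, Subgroup.ker_toQuotientProd M K hM hK]

/-- The chirality group of the mix, `Nʳ/(N ∩ Nʳ)` with `N = M ∩ K`, embeds into the
direct product `(rMr⁻¹·M/M) × (rKr⁻¹·K/K)` of the chirality groups of the components. -/
theorem stmt_9 (W : Type) [Group W] (r : W) (hr : r ^ 2 = 1)
    (Wp : Subgroup W) [Wp.Normal] (hWp : Wp.index = 2) (hrW : r ∉ Wp)
    (M K : Subgroup W) (hMle : M ≤ Wp) (hKle : K ≤ Wp)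
    [(M.subgroupOf Wp).Normal] [(K.subgroupOf Wp).Normal]
    [((M ⊓ K ⊓ conjSub r (M ⊓ K)).subgroupOf (conjSub r (M ⊓ K))).Normal]
    [(M.subgroupOf (conjSub r M ⊔ M)).Normal]
    [(K.subgroupOf (conjSub r K ⊔ K)).Normal] :
    ∃ f : (↥(conjSub r (M ⊓ K)) ⧸
          (M ⊓ K ⊓ conjSub r (M ⊓ K)).subgroupOf (conjSub r (M ⊓ K))) →*
        ((↥(conjSub r M ⊔ M) ⧸ M.subgroupOf (conjSub r M ⊔ M)) ×
         (↥(conjSub r K ⊔ K) ⧸ K.subgroupOf (conjSub r K ⊔ K))),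
      Function.Injective f :=
  stmt_9_general W r M K
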